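/- Sussman's identity: for all f₁, g₁, f₂, g₂ ∈ ℂ^N and every (l,s) ∈ ZMod N × ZMod N, ∑_{(k,r) ∈ ZMod N × ZMod N} V_{g₁}f₁(k,r) · conj(V_{g₂}f₂(k,r)) · e^{2πi·(ks − lr)/N} = N · V_{g₁}g₂(l,s) · conj(V_{f₁}f₂(l,s)), where (ks − lr)/N is computed from integer representatives of the products ks and lr in ZMod N (well defined). -/
import Mathlib


open Complex Finset

/-- The time-frequency shift `π(k,r)` on `ℂ^N ≅ (ZMod N → ℂ)`:
`(π(k,r)f)(j) = e^{2πi·rj/N} · f(j−k)`. -/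
noncomputable def tfShift (N : ℕ) (k r : ZMod N) : (ZMod N → ℂ) →ₗ[ℂ] (ZMod N → ℂ) where
  toFun f := fun j => Complex.exp (2 * Real.pi * Complex.I * (((r * j).val : ℂ) / (N : ℂ))) * f (j - k)
  map_add' f g := by
    funext j
    simp [mul_add]
  map_smul' c f := by
    funext j
    simp [Pi.smul_apply, smul_eq_mul]
    ring

/-- The inner product `⟨f,g⟩ = ∑ⱼ f(j)·conj(g(j))`, linear in the first argument. -/
noncomputable def inn {N : ℕ} [NeZero N] (f g : ZMod N → ℂ) : ℂ :=
  ∑ j, f j * starRingEnd ℂ (g j)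

/-- The short-time Fourier transform `V_g f(k,r) = ⟨f, π(k,r)g⟩`. -/
noncomputable def stft {N : ℕ} [NeZero N] (g f : ZMod N → ℂ) (k r : ZMod N) : ℂ :=
  inn f (tfShift N k r g)


variable {N : ℕ} [NeZero N]

noncomputable abbrev ψ (N : ℕ) [NeZero N] : AddChar (ZMod N) ℂ := ZMod.stdAddChar

lemma eexp (a : ZMod N) :
    Complex.exp (2 * Real.pi * Complex.I * ((a.val : ℂ) / (N : ℂ))) = ψ N a := by
  rw [ZMod.stdAddChar_apply, ZMod.toCircle_apply]
  ring_nf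

lemma conj_psi (a : ZMod N) : (starRingEnd ℂ) (ψ N a) = ψ N (-a) := by
  rw [AddChar.map_neg_eq_inv, ZMod.stdAddChar_apply, ← Circle.coe_inv_eq_conj, Circle.coe_inv]

lemma sum_psi (b : ZMod N) : ∑ r : ZMod N, ψ N (r * b) = if b = 0 then (N : ℂ) else 0 := by
  rw [AddChar.sum_mulShift b (ZMod.isPrimitive_stdAddChar N), ZMod.card]
  split_ifs <;> simp

lemma stft_eq (g f : ZMod N → ℂ) (k r : ZMod N) :
    stft g f k r = ∑ j, f j * ψ N (-(r * j)) * (starRingEnd ℂ) (g (j - k)) := by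
  unfold stft inn tfShift
  simp only [LinearMap.coe_mk, AddHom.coe_mk]
  refine Finset.sum_congr rfl fun j _ => ?_
  rw [map_mul, eexp, conj_psi, mul_assoc]

lemma conj_stft_eq (g f : ZMod N → ℂ) (k r : ZMod N) :
    (starRingEnd ℂ) (stft g f k r)
      = ∑ j, (starRingEnd ℂ) (f j) * ψ N (r * j) * g (j - k) := by
  rw [stft_eq, map_sum]
  refine Finset.sum_congr rfl fun j _ => ?_
  rw [map_mul, map_mul, conj_psi, neg_neg, Complex.conj_conj]

lemma double_reindex {N : ℕ} [NeZero N] (F G : ZMod N × ZMod N → ℂ)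
    (e : (ZMod N × ZMod N) ≃ (ZMod N × ZMod N)) (h : ∀ p, F p = G (e p)) :
    ∑ k : ZMod N, ∑ j : ZMod N, F (k, j) = ∑ u : ZMod N, ∑ t : ZMod N, G (u, t) := by
  rw [← Fintype.sum_prod_type, ← Fintype.sum_prod_type]
  exact Fintype.sum_equiv e F G h

def reindexE (N : ℕ) (l : ZMod N) : (ZMod N × ZMod N) ≃ (ZMod N × ZMod N) where
  toFun p := (p.2 + l - p.1, p.2 + l)
  invFun q := (q.2 - q.1, q.2 - l)
  left_inv p := Prod.ext (by simp) (by simp)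
  right_inv q := Prod.ext (by simp) (by simp)


/-- **Sussman's identity**: for all `f₁, g₁, f₂, g₂ ∈ ℂ^N` and every `(l,s)`,
`∑_{(k,r)} V_{g₁}f₁(k,r) · conj(V_{g₂}f₂(k,r)) · e^{2πi·(ks−lr)/N}
  = N · V_{g₁}g₂(l,s) · conj(V_{f₁}f₂(l,s))`. -/
theorem sussman_identity (N : ℕ) [NeZero N] (f₁ g₁ f₂ g₂ : ZMod N → ℂ) (l s : ZMod N) :
    ∑ p : ZMod N × ZMod N,
        stft g₁ f₁ p.1 p.2 * starRingEnd ℂ (stft g₂ f₂ p.1 p.2) *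
          Complex.exp (2 * Real.pi * Complex.I * (((p.1 * s - l * p.2).val : ℂ) / (N : ℂ)))
      = (N : ℂ) * stft g₁ g₂ l s * starRingEnd ℂ (stft f₁ f₂ l s) := by
  have key : ∑ p : ZMod N × ZMod N,
        stft g₁ f₁ p.1 p.2 * starRingEnd ℂ (stft g₂ f₂ p.1 p.2) *
          Complex.exp (2 * Real.pi * Complex.I * (((p.1 * s - l * p.2).val : ℂ) / (N : ℂ)))
      = ∑ k : ZMod N, ∑ j : ZMod N,
          f₁ j * (starRingEnd ℂ) (g₁ (j - k)) * (starRingEnd ℂ) (f₂ (j + l)) *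
            g₂ (j + l - k) * ψ N (k * s) * (N : ℂ) := by
    rw [Fintype.sum_prod_type]
    simp_rw [eexp]
    refine Finset.sum_congr rfl fun k _ => ?_
    have step1 : ∀ r : ZMod N,
        stft g₁ f₁ k r * (starRingEnd ℂ) (stft g₂ f₂ k r) * ψ N (k * s - l * r)
          = ∑ j : ZMod N, ∑ m : ZMod N,
              f₁ j * (starRingEnd ℂ) (g₁ (j - k)) * (starRingEnd ℂ) (f₂ m) * g₂ (m - k) *
                ψ N (k * s) * ψ N (r * (m - j - l)) := by
      intro r
      rw [stft_eq, conj_stft_eq, Finset.sum_mul_sum, Finset.sum_mul]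
      refine Finset.sum_congr rfl fun j _ => ?_
      rw [Finset.sum_mul]
      refine Finset.sum_congr rfl fun m _ => ?_
      have hc : ψ N (-(r * j)) * ψ N (r * m) * ψ N (k * s - l * r)
          = ψ N (k * s) * ψ N (r * (m - j - l)) := by
        rw [← AddChar.map_add_eq_mul, ← AddChar.map_add_eq_mul, ← AddChar.map_add_eq_mul]
        congr 1; ring
      linear_combination
        (f₁ j * (starRingEnd ℂ) (g₁ (j - k)) * (starRingEnd ℂ) (f₂ m) * g₂ (m - k)) * hc
    simp_rw [step1]
    rw [Finset.sum_comm]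
    refine Finset.sum_congr rfl fun j _ => ?_
    rw [Finset.sum_comm]
    have step2 : ∀ m : ZMod N,
        ∑ r : ZMod N, f₁ j * (starRingEnd ℂ) (g₁ (j - k)) * (starRingEnd ℂ) (f₂ m) * g₂ (m - k) *
            ψ N (k * s) * ψ N (r * (m - j - l))
          = f₁ j * (starRingEnd ℂ) (g₁ (j - k)) * (starRingEnd ℂ) (f₂ m) * g₂ (m - k) *
              ψ N (k * s) * (if m - j - l = 0 then (N : ℂ) else 0) := by
      intro m
      rw [← Finset.mul_sum, sum_psi]
    simp_rw [step2, sub_sub, sub_eq_zero, mul_ite, mul_zero]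
    rw [Finset.sum_ite_eq' Finset.univ (j + l)]
    simp
  rw [key, stft_eq, conj_stft_eq, mul_assoc, Finset.sum_mul_sum, Finset.mul_sum]
  simp_rw [Finset.mul_sum]
  refine double_reindex
    (fun p => f₁ p.2 * (starRingEnd ℂ) (g₁ (p.2 - p.1)) * (starRingEnd ℂ) (f₂ (p.2 + l)) *
      g₂ (p.2 + l - p.1) * ψ N (p.1 * s) * (N : ℂ))
    (fun q => (N : ℂ) * (g₂ q.1 * ψ N (-(s * q.1)) * (starRingEnd ℂ) (g₁ (q.1 - l)) *
      ((starRingEnd ℂ) (f₂ q.2) * ψ N (s * q.2) * f₁ (q.2 - l))))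
    (reindexE N l) ?_
  rintro ⟨k, j⟩
  simp only [reindexE, Equiv.coe_fn_mk]
  have h1 : j + l - k - l = j - k := by ring
  have h2 : j + l - l = j := by ring
  rw [h1, h2]
  have hc : ψ N (-(s * (j + l - k))) * ψ N (s * (j + l)) = ψ N (k * s) := by
    rw [← AddChar.map_add_eq_mul]
    congr 1; ring
  linear_combination
    (-((N : ℂ)) * g₂ (j + l - k) * (starRingEnd ℂ) (g₁ (j - k)) * (starRingEnd ℂ) (f₂ (j + l)) *
      f₁ j) * hc
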